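/- Let X be the Weighted Load Balancing allocation for n agents with identical additive cost function c, weights w_i summing to 1, and item costs at most 1. Then ∑_i max{c(X_i) − w_i·c(M), 0} ≤ n/4 if n is even, and ≤ (n²−1)/(4n) if n is odd. -/

import Mathlib

/-!
Each item is handed to an agent of largest remaining entitlement `w i · c(M) − c(X_i^{<j})`.
Look at an overloaded agent `i` when it received its last item `e`: its remaining entitlement,
`−excess_i + c(e)`, was at least that of any other agent `j`, which is at least `deficit_j`.
Hence `excess_i + deficit_j ≤ c(e) ≤ 1`. Total excess and total deficit are both equal to the
subsidy `S`, so summing over the `k` overloaded agents and the `n − k` others gives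
`n · S ≤ k (n − k)`, which is at most `n²/4`, and at most `(n² − 1)/4` when `n` is odd.
-/

open Finset

theorem four_mul_mul_sub_le_sq_sub_one_of_odd {n k : ℕ} (hn : Odd n) :
    4 * (k : ℝ) * (n - k) ≤ (n : ℝ) ^ 2 - 1 := by
  obtain ⟨t, rfl⟩ := hn
  have hk : (0 : ℝ) ≤ ((k : ℝ) - t) * ((k : ℝ) - t - 1) := by
    rcases le_or_gt k t with hkt | hkt
    · have : (k : ℝ) ≤ t := by exact_mod_cast hkt
      nlinarith
    · have : (t : ℝ) + 1 ≤ k := by exact_mod_cast hkt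
      nlinarith
  push_cast
  nlinarith

section Counting

variable {ι : Type*} [Fintype ι]

theorem card_mul_sum_max_zero_le {d : ι → ℝ} (hsum : ∑ i, d i = 0)
    (hgap : ∀ i j, 0 < d i → d j ≤ 0 → d i - d j ≤ 1) :
    (Fintype.card ι : ℝ) * ∑ i, max (d i) 0 ≤
      #{i | 0 < d i} * ((Fintype.card ι : ℝ) - #{i | 0 < d i}) := by
  classical
  set P : Finset ι := {i | 0 < d i}
  set Q : Finset ι := {i | ¬0 < d i}
  set S := ∑ i ∈ P, d i
  have hmax : ∑ i, max (d i) 0 = S := by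
    simp only [S, P, sum_filter]
    exact sum_congr rfl fun i _ => by
      split_ifs with h
      exacts [max_eq_left h.le, max_eq_right (not_lt.1 h)]
  have hQ : ∑ j ∈ Q, -d j = S := by
    rw [sum_neg_distrib, neg_eq_iff_add_eq_zero, add_comm, sum_filter_add_sum_filter_not, hsum]
  have hcard : (#P : ℝ) + #Q = Fintype.card ι := by
    exact_mod_cast card_filter_add_card_filter_not _
  have hper : ∀ j ∈ Q, S + #P * -d j ≤ #P := by
    intro j hj
    have h : ∑ i ∈ P, (d i - d j) ≤ ∑ i ∈ P, 1 := sum_le_sum fun i hi =>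
      hgap i j (mem_filter.1 hi).2 (not_lt.1 (mem_filter.1 hj).2)
    rw [sum_sub_distrib, sum_const, sum_const, nsmul_eq_mul, nsmul_eq_mul, mul_one] at h
    linarith
  have htotal := sum_le_sum hper
  rw [sum_add_distrib, ← mul_sum, hQ] at htotal
  simp only [sum_const, nsmul_eq_mul] at htotal
  rw [hmax, ← hcard]
  nlinarith

theorem sum_max_zero_le_of_even_of_odd {d : ι → ℝ} (hsum : ∑ i, d i = 0)
    (hgap : ∀ i j, 0 < d i → d j ≤ 0 → d i - d j ≤ 1) :
    (Even (Fintype.card ι) → ∑ i, max (d i) 0 ≤ (Fintype.card ι : ℝ) / 4) ∧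
    (Odd (Fintype.card ι) →
      ∑ i, max (d i) 0 ≤ ((Fintype.card ι : ℝ) ^ 2 - 1) / (4 * Fintype.card ι)) := by
  have hcount := card_mul_sum_max_zero_le hsum hgap
  set n := Fintype.card ι
  set k := #{i | 0 < d i}
  rcases Nat.eq_zero_or_pos n with hn | hn
  · simp [Fintype.card_eq_zero_iff.1 hn, hn]
  have hn' : (0 : ℝ) < n := by exact_mod_cast hn
  refine ⟨fun _ => ?_, fun hodd => ?_⟩
  · rw [le_div_iff₀ four_pos]
    nlinarith [sq_nonneg ((n : ℝ) - 2 * k)]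
  · rw [le_div_iff₀ (by positivity)]
    nlinarith [four_mul_mul_sub_le_sq_sub_one_of_odd (k := k) hodd]

end Counting

section Greedy

variable {α ι : Type*} [Fintype α] [LinearOrder α] [DecidableEq ι] (c : α → ℝ) (a : α → ι)

def bundleCost (i : ι) : ℝ := ∑ e with a e = i, c e

def bundleCostBefore (j : α) (i : ι) : ℝ := ∑ e with e < j ∧ a e = i, c e

variable {c a}

theorem bundleCostBefore_le_bundleCost (hc : ∀ e, 0 ≤ c e) (j : α) (i : ι) :
    bundleCostBefore c a j i ≤ bundleCost c a i :=
  sum_le_sum_of_subset_of_nonneg (monotone_filter_right _ fun _ _ h => h.2)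
    fun e _ _ => hc e

theorem bundleCostBefore_max' {i : ι} (hi : ({e | a e = i} : Finset α).Nonempty) :
    bundleCostBefore c a (({e | a e = i} : Finset α).max' hi) i =
      bundleCost c a i - c (({e | a e = i} : Finset α).max' hi) := by
  rw [bundleCost, ← sum_erase_eq_sub (max'_mem _ hi), bundleCostBefore]
  congr 1
  ext e
  simp only [mem_filter, mem_univ, true_and, mem_erase]
  exact ⟨fun h => ⟨h.1.ne, h.2⟩,
    fun h => ⟨lt_of_le_of_ne (le_max' _ e (by simpa using h.2)) h.1, h.2⟩⟩

theorem excess_sub_excess_le {t : ι → ℝ} (hc : ∀ e, 0 ≤ c e ∧ c e ≤ 1)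
    (hgreedy : ∀ j i, t i - bundleCostBefore c a j i ≤ t (a j) - bundleCostBefore c a j (a j))
    {i : ι} (hi : ({e | a e = i} : Finset α).Nonempty) (j : ι) :
    (bundleCost c a i - t i) - (bundleCost c a j - t j) ≤ 1 := by
  set last := ({e | a e = i} : Finset α).max' hi
  have hlast : a last = i := (mem_filter.1 (max'_mem _ hi)).2
  have h := hgreedy last j
  rw [hlast, bundleCostBefore_max'] at h
  linarith [bundleCostBefore_le_bundleCost (a := a) (fun e => (hc e).1) last j, (hc last).2]

end Greedy

theorem weightedLoadBalancing_subsidy_bound_general (n m : ℕ)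
    (c : Fin m → ℝ) (w : Fin n → ℝ)
    (hc : ∀ e, 0 ≤ c e ∧ c e ≤ 1)
    (hw : ∀ i, 0 ≤ w i) (hwsum : ∑ i, w i = 1)
    (a : Fin m → Fin n)
    (halg : ∀ (j : Fin m) (i : Fin n),
      w i * (∑ e, c e) - ∑ e ∈ Finset.univ.filter (fun e => e < j ∧ a e = i), c e ≤
        w (a j) * (∑ e, c e) -
          ∑ e ∈ Finset.univ.filter (fun e => e < j ∧ a e = a j), c e) :
    (Even n →
      ∑ i : Fin n,
        max ((∑ e ∈ Finset.univ.filter (fun e => a e = i), c e) - w i * ∑ e', c e') 0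
          ≤ (n : ℝ) / 4) ∧
    (Odd n →
      ∑ i : Fin n,
        max ((∑ e ∈ Finset.univ.filter (fun e => a e = i), c e) - w i * ∑ e', c e') 0
          ≤ ((n : ℝ) ^ 2 - 1) / (4 * n)) := by
  set C := ∑ e, c e
  have hsum : ∑ i, (bundleCost c a i - w i * C) = 0 := by
    simp only [bundleCost, sum_sub_distrib, ← sum_mul, hwsum, one_mul, sum_fiberwise, C, sub_self]
  have hgap : ∀ i j, 0 < bundleCost c a i - w i * C → bundleCost c a j - w j * C ≤ 0 →
      (bundleCost c a i - w i * C) - (bundleCost c a j - w j * C) ≤ 1 := by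
    intro i j hi _
    refine excess_sub_excess_le hc halg (nonempty_iff_ne_empty.2 fun hempty => ?_) j
    have hC : 0 ≤ w i * C := mul_nonneg (hw i) (sum_nonneg fun e _ => (hc e).1)
    simp only [bundleCost, hempty, sum_empty] at hi
    linarith
  simpa only [Fintype.card_fin, bundleCost] using sum_max_zero_le_of_even_of_odd hsum hgap

/-- Total subsidy bound for the Weighted Load Balancing allocation: with
identical additive costs (each item costing at most 1) and weights summing to 1,
`∑ i, max (c(X_i) - w i · c(M)) 0 ≤ n/4` if `n` is even and
`≤ (n² - 1)/(4n)` if `n` is odd. -/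
theorem weightedLoadBalancing_subsidy_bound (n m : ℕ) (hn : 0 < n)
    (c : Fin m → ℝ) (w : Fin n → ℝ)
    (hc : ∀ e, 0 ≤ c e ∧ c e ≤ 1)
    (hsort : ∀ j k : Fin m, j ≤ k → c k ≤ c j)
    (hw : ∀ i, 0 ≤ w i) (hwsum : ∑ i, w i = 1)
    (a : Fin m → Fin n)
    (halg : ∀ (j : Fin m) (i : Fin n),
      w i * (∑ e, c e) - ∑ e ∈ Finset.univ.filter (fun e => e < j ∧ a e = i), c e ≤
        w (a j) * (∑ e, c e) -
          ∑ e ∈ Finset.univ.filter (fun e => e < j ∧ a e = a j), c e) :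
    (Even n →
      ∑ i : Fin n,
        max ((∑ e ∈ Finset.univ.filter (fun e => a e = i), c e) - w i * ∑ e', c e') 0
          ≤ (n : ℝ) / 4) ∧
    (Odd n →
      ∑ i : Fin n,
        max ((∑ e ∈ Finset.univ.filter (fun e => a e = i), c e) - w i * ∑ e', c e') 0
          ≤ ((n : ℝ) ^ 2 - 1) / (4 * n)) :=
  weightedLoadBalancing_subsidy_bound_general n m c w hc hw hwsum a halg
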